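/- arXiv:2402.02698 — 4 statements merged into one kernel-verified Lean document; each statement's English description precedes it below -/
import Mathlib

section
/- For a real-valued random variable X and integer k ≥ 2, the k-th distribution function defined recursively by F_X^k(η) = ∫_{-∞}^η F_X^{k-1}(α) dα (with F_X^1 the CDF) satisfies F_X^k(η) = E[(η - X)_+^{k-1}] / (k-1)!. -/
open MeasureTheory Set

lemma int_ind (c η : ℝ) :
    ∫ α in Iic η, (if c ≤ α then (1:ℝ) else 0) = max (η - c) 0 := by
  have h1 : ∀ α : ℝ, (if c ≤ α then (1:ℝ) else 0) = (Ici c).indicator (fun _ => (1:ℝ)) α := by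
    intro α; simp [Set.indicator_apply, Set.mem_Ici]
  simp_rw [h1]
  rw [setIntegral_indicator measurableSet_Ici]
  rw [setIntegral_const]
  have : Iic η ∩ Ici c = Icc c η := by
    ext x; simp [Set.mem_Icc, and_comm]
  rw [this, Real.volume_real_Icc, smul_eq_mul, mul_one]

lemma int_pow_aux (c η : ℝ) (j : ℕ) :
    ∫ α in Iic η, max (α - c) 0 ^ (j + 1) = max (η - c) 0 ^ (j + 2) / (j + 2) := by
  rcases le_or_gt c η with h | h
  · have hsplit : Iic η = Iic c ∪ Ioc c η := (Set.Iic_union_Ioc_eq_Iic h).symm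
    have hzero : ∀ α ∈ Iic c, max (α - c) 0 ^ (j + 1) = (0:ℝ) := by
      intro α hα
      have : max (α - c) 0 = 0 := max_eq_right (by simp at hα; linarith)
      simp [this]
    have hint2 : IntegrableOn (fun α => max (α - c) 0 ^ (j + 1)) (Ioc c η) := by
      apply (ContinuousOn.integrableOn_compact isCompact_Icc
        (Continuous.continuousOn (by continuity))).mono_set Ioc_subset_Icc_self
    rw [hsplit, setIntegral_union (Set.Iic_disjoint_Ioc le_rfl) measurableSet_Ioc]
    · rw [setIntegral_congr_fun measurableSet_Iic hzero]
      simp only [integral_zero, zero_add]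
      have hIoc : ∀ α ∈ Ioc c η, max (α - c) 0 ^ (j + 1) = (α - c) ^ (j+1) := by
        intro α hα
        rw [max_eq_left (by simp at hα; linarith)]
      rw [setIntegral_congr_fun measurableSet_Ioc hIoc,
        ← intervalIntegral.integral_of_le h,
        intervalIntegral.integral_comp_sub_right (fun x => x ^ (j+1)) c]
      rw [sub_self]
      rw [integral_pow]
      rw [max_eq_left (by linarith)]
      push_cast
      ring_nf
    · exact (integrableOn_congr_fun hzero measurableSet_Iic).mpr (integrableOn_zero)
    · exact hint2
  · have hzero : ∀ α ∈ Iic η, max (α - c) 0 ^ (j + 1) = (0:ℝ) := by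
      intro α hα
      have : max (α - c) 0 = 0 := max_eq_right (by simp at hα; linarith)
      simp [this]
    rw [setIntegral_congr_fun measurableSet_Iic hzero]
    rw [max_eq_right (by linarith)]
    simp

/-- the recursively defined k-th distribution function equals
`E[(η - X)_+^{k-1}] / (k-1)!` for `k ≥ 2`. -/
theorem kth_distribution_function_eq_expectation
    {Ω : Type*} [MeasurableSpace Ω] (P : Measure Ω) [IsProbabilityMeasure P]
    (X : Ω → ℝ) (hX : Measurable X)
    (F : ℕ → ℝ → ℝ)
    (hF1 : ∀ η : ℝ, F 1 η = (P {ω | X ω ≤ η}).toReal)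
    (hFrec : ∀ k : ℕ, 2 ≤ k → ∀ η : ℝ, F k η = ∫ α in Iic η, F (k - 1) α)
    (hFint : ∀ (k : ℕ) (η : ℝ), IntegrableOn (F k) (Iic η))
    (hXint : ∀ (j : ℕ) (η : ℝ), Integrable (fun ω => max (η - X ω) 0 ^ j) P)
    (k : ℕ) (hk : 2 ≤ k) (η : ℝ) :
    F k η = (∫ ω, max (η - X ω) 0 ^ (k - 1) ∂P) / (Nat.factorial (k - 1) : ℝ) := by
  induction k, hk using Nat.le_induction generalizing η with
  | base =>
    -- k = 2
    have hF1' : ∀ α : ℝ, F 1 α = ∫ ω, (if X ω ≤ α then (1:ℝ) else 0) ∂P := by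
      intro α
      rw [hF1]
      have hms : MeasurableSet {ω | X ω ≤ α} := hX measurableSet_Iic
      have : ∀ ω, (if X ω ≤ α then (1:ℝ) else 0)
          = ({ω | X ω ≤ α}).indicator (fun _ => (1:ℝ)) ω := by
        intro ω; simp [Set.indicator_apply]
      simp_rw [this]
      rw [integral_indicator hms, setIntegral_const, smul_eq_mul, mul_one, measureReal_def]
    set g : ℝ × Ω → ℝ := fun p => if X p.2 ≤ p.1 then (1:ℝ) else 0 with hg
    have hmg : Measurable g := by
      have hset : MeasurableSet {p : ℝ × Ω | X p.2 ≤ p.1} :=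
        measurableSet_le (hX.comp measurable_snd) measurable_fst
      exact Measurable.ite hset measurable_const measurable_const
    have hintg : Integrable g ((volume.restrict (Iic η)).prod P) := by
      rw [integrable_prod_iff hmg.aestronglyMeasurable]
      constructor
      · refine Filter.Eventually.of_forall fun α => ?_
        refine (integrable_const (1:ℝ)).mono' (hmg.comp (measurable_prodMk_left)).aestronglyMeasurable ?_
        refine Filter.Eventually.of_forall fun ω => ?_
        simp only [hg]
        split_ifs <;> simp
      · have heq : (fun α => ∫ ω, ‖g (α, ω)‖ ∂P) = fun α => F 1 α := by
          funext α
          rw [hF1' α]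
          congr 1
          funext ω
          simp only [hg]
          split_ifs <;> simp
        rw [heq]
        exact hFint 1 η
    have hswap := integral_integral_swap (f := fun α ω => g (α, ω)) hintg
    rw [hFrec 2 le_rfl η]
    have hcalc : ∫ α in Iic η, F 1 α = ∫ ω, max (η - X ω) 0 ∂P := by
      simp_rw [hF1']
      rw [hswap]
      exact integral_congr_ae (Filter.Eventually.of_forall fun ω => int_ind (X ω) η)
    show (∫ α in Iic η, F 1 α) = (∫ ω, max (η - X ω) 0 ^ 1 ∂P) / (Nat.factorial 1 : ℝ)
    simp [hcalc]
  | succ n hn IH =>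
    obtain ⟨j, rfl⟩ : ∃ j, n = j + 2 := ⟨n - 2, by omega⟩
    have hFn : ∀ α : ℝ, F (j+2) α
        = (∫ ω, max (α - X ω) 0 ^ (j+1) ∂P) / (Nat.factorial (j+1) : ℝ) := fun α => IH α
    have hmg : Measurable (fun p : ℝ × Ω => max (p.1 - X p.2) 0 ^ (j+1)) :=
      ((measurable_fst.sub (hX.comp measurable_snd)).max measurable_const).pow_const _
    have hnorm : ∀ (α : ℝ) (ω : Ω), ‖max (α - X ω) 0 ^ (j+1)‖ = max (α - X ω) 0 ^ (j+1) :=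
      fun α ω => Real.norm_of_nonneg (pow_nonneg (le_max_right _ _) _)
    have hintg : Integrable (fun p : ℝ × Ω => max (p.1 - X p.2) 0 ^ (j+1))
        ((volume.restrict (Iic η)).prod P) := by
      rw [integrable_prod_iff hmg.aestronglyMeasurable]
      refine ⟨Filter.Eventually.of_forall fun α => hXint (j+1) α, ?_⟩
      have heq : (fun α => ∫ ω, ‖max (α - X ω) 0 ^ (j+1)‖ ∂P)
          = fun α => (Nat.factorial (j+1) : ℝ) * F (j+2) α := by
        funext α
        simp_rw [hnorm]
        rw [hFn α]
        have hne : (Nat.factorial (j+1) : ℝ) ≠ 0 := by positivity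
        field_simp
      rw [heq]
      exact (hFint (j+2) η).const_mul _
    have hswap := integral_integral_swap
      (f := fun (α : ℝ) (ω : Ω) => max (α - X ω) 0 ^ (j+1)) hintg
    rw [hFrec (j+3) (by omega) η]
    show (∫ α in Iic η, F (j+2) α)
      = (∫ ω, max (η - X ω) 0 ^ (j+2) ∂P) / (Nat.factorial (j+2) : ℝ)
    simp_rw [hFn, integral_div]
    rw [hswap]
    have hin : ∫ ω, (∫ α in Iic η, max (α - X ω) 0 ^ (j+1)) ∂P
        = ∫ ω, max (η - X ω) 0 ^ (j+2) / ((j:ℝ)+2) ∂P :=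
      integral_congr_ae (Filter.Eventually.of_forall fun ω => by
        simpa using int_pow_aux (X ω) η j)
    rw [hin, integral_div, div_div]
    congr 1
    have hfac : ((j + 2).factorial : ℝ) = ((j:ℝ) + 2) * ((j + 1).factorial : ℝ) := by
      rw [show j + 2 = (j + 1) + 1 from rfl, Nat.factorial_succ (j + 1)]
      push_cast
      ring
    rw [hfac]
end

section
/- If Θ is a compact topological space and θ ↦ F_{X_θ}^k(η) is continuous in θ for every η ∈ ℝ, then a maximal element exists with respect to the k-th order stochastic dominance partial preorder, i.e., there exists θ* ∈ Θ such that no θ ∈ Θ with X_θ strictly dominating X_{θ*} exists. -/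
/-!
Order the θ's by pointwise comparison of `F θ`. By continuity, `θ ↦ F θ` maps the compact `Θ`
onto a compact subset of `ℝ → ℝ`, whose lower sets `Iic z` are closed. Along a chain these closed
sets are directed, so by compactness they have a common point in the image: every chain has a
lower bound, and Zorn's lemma yields a minimal element, i.e. a non-dominated `θ*`.
-/

open MeasureTheory Set

section CompactMinimal

variable {β : Type*} [Preorder β] [TopologicalSpace β] [ClosedIicTopology β] {s : Set β}

theorem IsCompact.exists_lowerBound_of_isChain (hs : IsCompact s) {c : Set β} (hcs : c ⊆ s)
    (hc : IsChain (· ≤ ·) c) (hne : c.Nonempty) : ∃ lb ∈ s, ∀ z ∈ c, lb ≤ z := by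
  have : Nonempty c := hne.to_subtype
  have hdir : Directed (· ⊇ ·) fun z : c => Iic (z : β) := by
    rintro ⟨a, ha⟩ ⟨b, hb⟩
    rcases hc.total ha hb with hab | hba
    · exact ⟨⟨a, ha⟩, subset_rfl, Iic_subset_Iic.2 hab⟩
    · exact ⟨⟨b, hb⟩, Iic_subset_Iic.2 hba, subset_rfl⟩
  by_contra! h
  have hempty : s ∩ ⋂ z : c, Iic (z : β) = ∅ := by
    refine eq_empty_of_forall_notMem fun x ⟨hxs, hx⟩ => ?_
    obtain ⟨z, hz, hxz⟩ := h x hxs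
    exact hxz (mem_iInter.1 hx ⟨z, hz⟩)
  obtain ⟨⟨z, hz⟩, hsz⟩ := hs.elim_directed_family_closed _ (fun _ => isClosed_Iic) hempty hdir
  exact hsz.subset ⟨hcs hz, le_rfl⟩

theorem IsCompact.exists_minimal (hs : IsCompact s) (hne : s.Nonempty) :
    ∃ m, Minimal (· ∈ s) m := by
  obtain ⟨m, hm⟩ := zorn_le₀ (α := βᵒᵈ) s fun c hcs hc => by
    rcases c.eq_empty_or_nonempty with rfl | hc_ne
    · obtain ⟨x, hx⟩ := hne
      exact ⟨x, hx, by simp⟩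
    · exact hs.exists_lowerBound_of_isChain hcs hc.symm hc_ne
  exact ⟨OrderDual.ofDual m, hm⟩

end CompactMinimal

theorem exists_nondominated_solution_general
    {Θ : Type*} [TopologicalSpace Θ] [CompactSpace Θ] [Nonempty Θ]
    (F : Θ → ℝ → ℝ)
    (hcont : ∀ η : ℝ, Continuous fun θ => F θ η) :
    ∃ θs : Θ, ∀ θ : Θ, (∀ η : ℝ, F θ η ≤ F θs η) → ∀ η : ℝ, F θ η = F θs η := by
  obtain ⟨_, ⟨θs, rfl⟩, hmin⟩ :=
    (isCompact_range (continuous_pi hcont)).exists_minimal (range_nonempty F)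
  exact ⟨θs, fun θ hθ η => le_antisymm (hθ η) (hmin ⟨θ, rfl⟩ hθ η)⟩

/-- Proposition 1: over a compact parameter space with
`θ ↦ F_{X_θ}^k(η)` continuous for every `η`, a maximal element for the k-th order
stochastic dominance preorder exists: some `θ*` such that any `θ` dominating `θ*`
has the same k-th distribution function. -/
theorem exists_nondominated_solution
    {Θ Ω : Type*} [TopologicalSpace Θ] [CompactSpace Θ] [Nonempty Θ]
    [MeasurableSpace Ω] (P : Measure Ω) [IsProbabilityMeasure P]
    (X : Θ → Ω → ℝ) (k : ℕ) (hk : 1 ≤ k)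
    (F : Θ → ℝ → ℝ)
    (hF : ∀ (θ : Θ) (η : ℝ),
      F θ η = (∫ ω, max (η - X θ ω) 0 ^ (k - 1) ∂P) / (Nat.factorial (k - 1) : ℝ))
    (hcont : ∀ η : ℝ, Continuous fun θ => F θ η) :
    ∃ θs : Θ, ∀ θ : Θ, (∀ η : ℝ, F θ η ≤ F θs η) → ∀ η : ℝ, F θ η = F θs η :=
  exists_nondominated_solution_general F hcont
end

section
/- Let n be even and x_1,…,x_n be reals with empirical measure P̂_n, let x̃ be a median of the sample, and let ρ ∈ (0,1). Then the infimum of E_P[X] over probability vectors P on {x_1,…,x_n} with ‖P - P̂_n‖_∞ ≤ ρ/n equals (1/n)Σ_i x_i - (ρ/n)Σ_i |x_i - x̃|. -/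
open Set Finset

/-- Theorem 3: the worst-case expectation over ℓ∞-bounded
perturbations of the empirical measure equals the empirical mean minus `ρ` times
the mean absolute deviation from the sample median. -/
theorem dro_linfty_eq_mean_minus_mad
    (n : ℕ) (hn : 0 < n) (hev : Even n) (ρ : ℝ) (hρ : ρ ∈ Set.Ioo (0 : ℝ) 1)
    (x : Fin n → ℝ) (m : ℝ)
    (hm1 : (n : ℝ) / 2 ≤ (Finset.univ.filter fun i => x i ≤ m).card)
    (hm2 : (n : ℝ) / 2 ≤ (Finset.univ.filter fun i => m ≤ x i).card) :
    sInf {r : ℝ | ∃ p : Fin n → ℝ, (∀ i, 0 ≤ p i) ∧ (∑ i, p i = 1) ∧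
        (∀ i, |p i - 1 / n| ≤ ρ / n) ∧ r = ∑ i, p i * x i}
      = (1 / n : ℝ) * ∑ i, x i - (ρ / n) * ∑ i, |x i - m| := by
  obtain ⟨hρ0, hρ1⟩ := hρ
  have hn' : (0:ℝ) < n := by exact_mod_cast hn
  have hρn : (0:ℝ) < ρ / n := by positivity
  -- key algebraic identity
  have key : ∀ p : Fin n → ℝ, (∑ i, p i = 1) →
      ∑ i, p i * x i = (1/n:ℝ) * ∑ i, x i + ∑ i, (p i - 1/n) * (x i - m) := by
    intro p hp
    have h1 : ∑ i, (p i - 1/n) * (x i - m)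
        = (∑ i, p i * x i) - m * (∑ i, p i) - (1/n:ℝ) * (∑ i, x i)
          + (n:ℝ) * ((1/n:ℝ) * m) := by
      simp only [sub_mul, mul_sub, Finset.sum_sub_distrib, Finset.mul_sum,
        Finset.sum_const, Finset.card_univ, Fintype.card_fin, nsmul_eq_mul]
      have hmp : ∑ i : Fin n, m * p i = ∑ i : Fin n, p i * m :=
        Finset.sum_congr rfl (fun i _ => mul_comm m (p i))
      rw [hmp]; ring
    rw [h1, hp]
    have : (n:ℝ) * ((1/n:ℝ) * m) = m := by field_simp
    linarith
  -- the target value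
  set t : ℝ := (1 / n : ℝ) * ∑ i, x i - (ρ / n) * ∑ i, |x i - m| with ht
  -- lower bound
  have hlb : ∀ r ∈ {r : ℝ | ∃ p : Fin n → ℝ, (∀ i, 0 ≤ p i) ∧ (∑ i, p i = 1) ∧
      (∀ i, |p i - 1 / n| ≤ ρ / n) ∧ r = ∑ i, p i * x i}, t ≤ r := by
    rintro r ⟨p, hp0, hp1, hpb, rfl⟩
    rw [key p hp1, ht]
    have hsum : -((ρ/n) * ∑ i, |x i - m|) ≤ ∑ i, (p i - 1/n) * (x i - m) := by
      rw [Finset.mul_sum, ← Finset.sum_neg_distrib]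
      apply Finset.sum_le_sum
      intro i _
      have h2 : |(p i - 1/n) * (x i - m)| ≤ (ρ/n) * |x i - m| := by
        rw [abs_mul]
        exact mul_le_mul_of_nonneg_right (hpb i) (abs_nonneg _)
      have h3 := neg_abs_le ((p i - 1/n) * (x i - m))
      linarith
    linarith
  -- the sets A, B, E
  set A : Finset (Fin n) := Finset.univ.filter (fun i => x i < m) with hA
  set B : Finset (Fin n) := Finset.univ.filter (fun i => m < x i) with hB
  set E : Finset (Fin n) := Finset.univ.filter (fun i => x i = m) with hE
  have dAB : Disjoint A B := by
    simp only [hA, hB, Finset.disjoint_left, Finset.mem_filter, Finset.mem_univ, true_and]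
    intro a h1 h2; linarith
  have dAE : Disjoint A E := by
    simp only [hA, hE, Finset.disjoint_left, Finset.mem_filter, Finset.mem_univ, true_and]
    intro a h1 h2; linarith [h2 ▸ h1]
  have dBE : Disjoint B E := by
    simp only [hB, hE, Finset.disjoint_left, Finset.mem_filter, Finset.mem_univ, true_and]
    intro a h1 h2; rw [h2] at h1; linarith
  have hUnion : A ∪ B ∪ E = Finset.univ := by
    ext i
    simp only [hA, hB, hE, Finset.mem_union, Finset.mem_filter, Finset.mem_univ, true_and,
      iff_true]
    rcases lt_trichotomy (x i) m with h | h | h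
    · exact Or.inl (Or.inl h)
    · exact Or.inr h
    · exact Or.inl (Or.inr h)
  have hsplit : ∀ f : Fin n → ℝ,
      ∑ i, f i = ∑ i ∈ A, f i + ∑ i ∈ B, f i + ∑ i ∈ E, f i := by
    intro f
    rw [← hUnion, Finset.sum_union (Finset.disjoint_union_left.mpr ⟨dAE, dBE⟩),
      Finset.sum_union dAB]
  -- card facts
  have e1 : Finset.univ.filter (fun i => x i ≤ m) = A ∪ E := by
    ext i
    simp only [hA, hE, Finset.mem_union, Finset.mem_filter, Finset.mem_univ, true_and]
    exact le_iff_lt_or_eq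
  have e2 : Finset.univ.filter (fun i => m ≤ x i) = B ∪ E := by
    ext i
    simp only [hB, hE, Finset.mem_union, Finset.mem_filter, Finset.mem_univ, true_and]
    rw [le_iff_lt_or_eq, eq_comm]
  have hm1' : (n:ℝ)/2 ≤ (A.card : ℝ) + E.card := by
    rw [e1, Finset.card_union_of_disjoint dAE] at hm1
    push_cast at hm1
    linarith
  have hm2' : (n:ℝ)/2 ≤ (B.card : ℝ) + E.card := by
    rw [e2, Finset.card_union_of_disjoint dBE] at hm2
    push_cast at hm2
    linarith
  have hABE : (A.card : ℝ) + B.card + E.card = n := by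
    have := hsplit (fun _ => (1:ℝ))
    simp only [Finset.sum_const, nsmul_eq_mul, mul_one, Finset.card_univ,
      Fintype.card_fin] at this
    linarith
  have hc1 : (B.card : ℝ) - A.card ≤ E.card := by linarith
  have hc2 : (A.card : ℝ) - B.card ≤ E.card := by linarith
  -- the witness probability vector
  set c : ℝ := (B.card : ℝ) - A.card with hcdef
  set v : ℝ := c * (ρ/n) / E.card with hv
  have hvabs : |v| ≤ ρ / n := by
    rcases eq_or_ne (E.card : ℝ) 0 with hE0 | hE0
    · have : c = 0 := by rw [hcdef]; rw [hE0] at hc1 hc2; linarith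
      rw [hv, this]; simp [hρn.le]
    · have hEpos : (0:ℝ) < E.card := lt_of_le_of_ne (by positivity) (Ne.symm hE0)
      rw [hv, abs_div, abs_mul, abs_of_pos hρn, abs_of_pos hEpos,
        div_le_iff₀ hEpos]
      have : |c| ≤ (E.card : ℝ) := abs_le.mpr ⟨by linarith, hc1⟩
      nlinarith
  set p : Fin n → ℝ := fun i =>
    if x i < m then 1/n + ρ/n else if m < x i then 1/n - ρ/n else 1/n + v with hp
  have hpb : ∀ i, |p i - 1/n| ≤ ρ/n := by
    intro i
    simp only [hp]
    split_ifs with h1 h2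
    · rw [show (1/(n:ℝ) + ρ/n - 1/n) = ρ/n by ring, abs_of_pos hρn]
    · rw [show (1/(n:ℝ) - ρ/n - 1/n) = -(ρ/n) by ring, abs_neg, abs_of_pos hρn]
    · rw [show (1/(n:ℝ) + v - 1/n) = v by ring]; exact hvabs
  have hp0 : ∀ i, 0 ≤ p i := by
    intro i
    have h := abs_le.mp (hpb i)
    have : ρ/(n:ℝ) ≤ 1/n := by gcongr <;> exact hρ1.le
    linarith [h.1]
  have hdsum : ∑ i, (p i - 1/n) = 0 := by
    rw [hsplit]
    have sA : ∑ i ∈ A, (p i - 1/n) = (A.card : ℝ) * (ρ/n) := by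
      have h : ∀ i ∈ A, p i - 1/(n:ℝ) = ρ/n := by
        intro i hi
        rw [hA, Finset.mem_filter] at hi
        simp only [hp, if_pos hi.2]; ring
      rw [Finset.sum_congr rfl h, Finset.sum_const, nsmul_eq_mul]
    have sB : ∑ i ∈ B, (p i - 1/n) = -((B.card : ℝ) * (ρ/n)) := by
      have h : ∀ i ∈ B, p i - 1/(n:ℝ) = -(ρ/n) := by
        intro i hi
        rw [hB, Finset.mem_filter] at hi
        simp only [hp, if_neg (asymm hi.2), if_pos hi.2]; ring
      rw [Finset.sum_congr rfl h, Finset.sum_const, nsmul_eq_mul]; ring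
    have sE : ∑ i ∈ E, (p i - 1/n) = (E.card : ℝ) * v := by
      have h : ∀ i ∈ E, p i - 1/(n:ℝ) = v := by
        intro i hi
        rw [hE, Finset.mem_filter] at hi
        have h1 : ¬ x i < m := by rw [hi.2]; exact lt_irrefl m
        have h2 : ¬ m < x i := by rw [hi.2]; exact lt_irrefl m
        simp only [hp, if_neg h1, if_neg h2]; ring
      rw [Finset.sum_congr rfl h, Finset.sum_const, nsmul_eq_mul]
    have hEv : (E.card : ℝ) * v = c * (ρ/n) := by
      rcases eq_or_ne (E.card : ℝ) 0 with hE0 | hE0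
      · have hc0 : c = 0 := by rw [hcdef]; rw [hE0] at hc1 hc2; linarith
        rw [hE0, hc0]; ring
      · rw [hv, mul_comm, div_mul_cancel₀ _ hE0]
    rw [sA, sB, sE, hEv, hcdef]; ring
  have hp1 : ∑ i, p i = 1 := by
    have : ∑ i, p i = ∑ i, ((p i - 1/n) + 1/n) := by
      apply Finset.sum_congr rfl; intro i _; ring
    rw [this, Finset.sum_add_distrib, hdsum, Finset.sum_const, Finset.card_univ,
      Fintype.card_fin, nsmul_eq_mul]
    field_simp
    norm_num
  have hval : ∑ i, p i * x i = t := by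
    rw [key p hp1, ht]
    have : ∑ i, (p i - 1/n) * (x i - m) = ∑ i, -((ρ/n) * |x i - m|) := by
      apply Finset.sum_congr rfl
      intro i _
      by_cases h1 : x i < m
      · simp only [hp]; simp only [if_pos h1]
        rw [abs_of_neg (by linarith : x i - m < 0)]; ring
      · by_cases h2 : m < x i
        · simp only [hp]; simp only [if_neg h1, if_pos h2]
          rw [abs_of_pos (by linarith : 0 < x i - m)]; ring
        · have : x i = m := le_antisymm (not_lt.mp h2) (not_lt.mp h1)
          rw [this]; simp
    rw [this, Finset.sum_neg_distrib, ← Finset.mul_sum]; ring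
  have hmem : t ∈ {r : ℝ | ∃ p : Fin n → ℝ, (∀ i, 0 ≤ p i) ∧ (∑ i, p i = 1) ∧
      (∀ i, |p i - 1 / n| ≤ ρ / n) ∧ r = ∑ i, p i * x i} :=
    ⟨p, hp0, hp1, hpb, hval.symm⟩
  exact le_antisymm (csInf_le ⟨t, hlb⟩ hmem) (le_csInf ⟨t, hmem⟩ hlb)
end

section
/- Let x ∈ ℝ^n with n even, let x̃ be a median of its entries, and let U = {u ∈ ℝ^n : 1^⊤u = 0, ‖u‖_∞ ≤ ε/n}. Then sup_{u∈U} u^⊤x = (ε/n) Σ_{i=1}^n |x_i - x̃|. -/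
open Set Finset

/-- `sup { uᵀx : 1ᵀu = 0, ‖u‖_∞ ≤ ε/n } = (ε/n) Σ |x_i - x̃|`
where `x̃` is a median and `n` is even. -/
theorem sup_centered_linfty_ball_eq_mad
    (n : ℕ) (hn : 0 < n) (hev : Even n) (ε : ℝ) (hε : 0 < ε)
    (x : Fin n → ℝ) (m : ℝ)
    (hm1 : (n : ℝ) / 2 ≤ (Finset.univ.filter fun i => x i ≤ m).card)
    (hm2 : (n : ℝ) / 2 ≤ (Finset.univ.filter fun i => m ≤ x i).card) :
    sSup {r : ℝ | ∃ u : Fin n → ℝ, (∑ i, u i = 0) ∧ (∀ i, |u i| ≤ ε / n) ∧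
        r = ∑ i, u i * x i}
      = (ε / n) * ∑ i, |x i - m| := by
  set c := ε / n with hc_def
  have hc : 0 ≤ c := le_of_lt (div_pos hε (by exact_mod_cast hn))
  obtain ⟨k, hk⟩ := hev
  set F := Finset.univ.filter (fun i : Fin n => x i ≤ m) with hF
  set P := Finset.univ.filter (fun i : Fin n => m < x i) with hPdef
  set Z := Finset.univ.filter (fun i : Fin n => x i = m) with hZdef
  have hkF : k ≤ F.card := by
    have hn2 : (n : ℝ) = k + k := by exact_mod_cast hk
    have h : (k : ℝ) ≤ (F.card : ℝ) := by linarith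
    exact_mod_cast h
  have hPF : P.card + F.card = n := by
    have := Finset.card_filter_add_card_filter_not
      (s := (Finset.univ : Finset (Fin n))) (p := fun i => x i ≤ m)
    simp only [Finset.card_univ, Fintype.card_fin] at this
    have hPc : P = Finset.univ.filter (fun i => ¬ x i ≤ m) := by
      apply Finset.filter_congr; intro i _; simp [not_le]
    rw [hPc, hF]; omega
  have hPk : P.card ≤ k := by omega
  have hPZdisj : Disjoint P Z := by
    rw [Finset.disjoint_left]
    intro i hiP hiZ
    simp only [hPdef, hZdef, Finset.mem_filter] at hiP hiZ
    exact absurd hiZ.2 (ne_of_gt hiP.2)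
  have hunion : Finset.univ.filter (fun i : Fin n => m ≤ x i) = P ∪ Z := by
    ext i
    simp only [Finset.mem_filter, Finset.mem_union, Finset.mem_univ, true_and,
      hPdef, hZdef]
    constructor
    · intro h; rcases lt_or_eq_of_le h with h | h
      · exact Or.inl h
      · exact Or.inr h.symm
    · rintro (h | h)
      · exact le_of_lt h
      · exact le_of_eq h.symm
  have hkPZ : k ≤ P.card + Z.card := by
    have hn2 : (n : ℝ) = k + k := by exact_mod_cast hk
    have h : (k : ℝ) ≤ ((Finset.univ.filter fun i : Fin n => m ≤ x i).card : ℝ) := by linarith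
    have h2 : k ≤ (Finset.univ.filter fun i : Fin n => m ≤ x i).card := by exact_mod_cast h
    rwa [hunion, Finset.card_union_of_disjoint hPZdisj] at h2
  obtain ⟨S, hSZ, hScard⟩ := Finset.exists_subset_card_eq (s := Z) (n := k - P.card) (by omega)
  set T := P ∪ S with hTdef
  have hTcard : T.card = k := by
    rw [hTdef, Finset.card_union_of_disjoint (hPZdisj.mono_right hSZ), hScard]
    omega
  have hTccard : Tᶜ.card = k := by
    rw [Finset.card_compl, hTcard]
    simp only [Fintype.card_fin]; omega
  set u : Fin n → ℝ := fun i => if i ∈ T then c else -c with hu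
  have hTge : ∀ i ∈ T, m ≤ x i := by
    intro i hi
    rcases Finset.mem_union.mp hi with h | h
    · exact le_of_lt (Finset.mem_filter.mp h).2
    · exact le_of_eq ((Finset.mem_filter.mp (hSZ h)).2).symm
  have hTle : ∀ i, i ∉ T → x i ≤ m := by
    intro i hi
    have hiP : i ∉ P := fun h => hi (Finset.mem_union_left _ h)
    by_contra h
    exact hiP (Finset.mem_filter.mpr ⟨Finset.mem_univ _, not_le.mp h⟩)
  have husum : ∑ i, u i = 0 := by
    rw [← Finset.sum_add_sum_compl T]
    have h1 : ∑ i ∈ T, u i = T.card • c :=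
      by rw [← Finset.sum_const]; exact Finset.sum_congr rfl (fun i hi => by simp [hu, hi])
    have h2 : ∑ i ∈ Tᶜ, u i = Tᶜ.card • (-c) := by
      rw [← Finset.sum_const]
      refine Finset.sum_congr rfl (fun i hi => ?_)
      simp only [hu]
      rw [if_neg (Finset.mem_compl.mp hi)]
    rw [h1, h2, hTcard, hTccard]
    simp [nsmul_eq_mul]
  have hubd : ∀ i, |u i| ≤ c := by
    intro i; simp only [hu]
    split <;> simp [abs_of_nonneg hc, abs_of_nonpos (neg_nonpos.mpr hc), hc]
  have hpoint : ∀ i, u i * x i = c * |x i - m| + u i * m := by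
    intro i
    by_cases hi : i ∈ T
    · have hx := hTge i hi
      simp only [hu, if_pos hi]
      rw [abs_of_nonneg (by linarith)]; ring
    · have hx := hTle i hi
      simp only [hu, if_neg hi]
      rw [abs_of_nonpos (by linarith)]; ring
  have hval : ∑ i, u i * x i = c * ∑ i, |x i - m| := by
    calc ∑ i, u i * x i = ∑ i, (c * |x i - m| + u i * m) :=
          Finset.sum_congr rfl (fun i _ => hpoint i)
      _ = c * ∑ i, |x i - m| + (∑ i, u i) * m := by
          rw [Finset.sum_add_distrib, Finset.mul_sum, Finset.sum_mul]
      _ = c * ∑ i, |x i - m| := by rw [husum]; ring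
  have hmem : c * ∑ i, |x i - m| ∈ {r : ℝ | ∃ u : Fin n → ℝ, (∑ i, u i = 0) ∧
      (∀ i, |u i| ≤ ε / n) ∧ r = ∑ i, u i * x i} :=
    ⟨u, husum, fun i => hubd i, hval.symm⟩
  have hub : ∀ r ∈ {r : ℝ | ∃ u : Fin n → ℝ, (∑ i, u i = 0) ∧ (∀ i, |u i| ≤ ε / n) ∧
      r = ∑ i, u i * x i}, r ≤ c * ∑ i, |x i - m| := by
    rintro r ⟨v, hv0, hvbd, rfl⟩
    have h1 : ∑ i, v i * x i = ∑ i, v i * (x i - m) := by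
      have : ∑ i, v i * (x i - m) = ∑ i, v i * x i - (∑ i, v i) * m := by
        rw [Finset.sum_mul, ← Finset.sum_sub_distrib]
        exact Finset.sum_congr rfl (fun i _ => by ring)
      rw [this, hv0]; ring
    rw [h1, Finset.mul_sum]
    refine Finset.sum_le_sum (fun i _ => ?_)
    calc v i * (x i - m) ≤ |v i * (x i - m)| := le_abs_self _
      _ = |v i| * |x i - m| := abs_mul _ _
      _ ≤ c * |x i - m| := by
          exact mul_le_mul_of_nonneg_right (hvbd i) (abs_nonneg _)
  exact le_antisymm (csSup_le ⟨_, hmem⟩ hub) (le_csSup ⟨_, hub⟩ hmem)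
end
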